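/- For any invertible diagonal matrices T_1, T_2 ∈ ℝ^{L×L} and any subspace V ⊆ ℝ^L, the second order extension width is at most the second order contraction width: Δ²_{T_1,T_2} V ≤ ∇²_{T_1,T_2} V. Equivalently, Δ_{T_1}(e_{T_2} V) − Δ_{T_1} V ≤ Δ_{T_1} V − Δ_{T_1}(c_{T_2} V). -/
import Mathlib

open Matrix Submodule Module

/-- The extension of a subspace `V` under a matrix `A`: `e_A V = V + A V`. -/
noncomputable def extT {n : Type*} [Fintype n] [DecidableEq n] (A : Matrix n n ℝ)
    (V : Submodule ℝ (n → ℝ)) : Submodule ℝ (n → ℝ) :=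
  V ⊔ V.map (Matrix.toLin' A)

/-- The contraction of a subspace `V` under a matrix `A`: `c_A V = V ∩ A V`. -/
noncomputable def conT {n : Type*} [Fintype n] [DecidableEq n] (A : Matrix n n ℝ)
    (V : Submodule ℝ (n → ℝ)) : Submodule ℝ (n → ℝ) :=
  V ⊓ V.map (Matrix.toLin' A)

/-- The alignment width `Δ_A V = dim(e_A V) − dim V`. -/
noncomputable def widthT {n : Type*} [Fintype n] [DecidableEq n] (A : Matrix n n ℝ)
    (V : Submodule ℝ (n → ℝ)) : ℕ :=
  finrank ℝ ↥(extT A V) - finrank ℝ ↥V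

lemma finrank_le_extT {n : Type*} [Fintype n] [DecidableEq n] (A : Matrix n n ℝ)
    (V : Submodule ℝ (n → ℝ)) : finrank ℝ ↥V ≤ finrank ℝ ↥(extT A V) :=
  Submodule.finrank_mono le_sup_left

lemma extT_sup {n : Type*} [Fintype n] [DecidableEq n] (A : Matrix n n ℝ)
    (V W : Submodule ℝ (n → ℝ)) : extT A (V ⊔ W) = extT A V ⊔ extT A W := by
  simp only [extT, Submodule.map_sup]
  exact sup_sup_sup_comm _ _ _ _

lemma extT_inf_le {n : Type*} [Fintype n] [DecidableEq n] (A : Matrix n n ℝ)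
    (V W : Submodule ℝ (n → ℝ)) : extT A (V ⊓ W) ≤ extT A V ⊓ extT A W := by
  simp only [extT]
  exact le_inf (sup_le_sup inf_le_left (Submodule.map_mono inf_le_left))
    (sup_le_sup inf_le_right (Submodule.map_mono inf_le_right))

/-- Submodularity of `U ↦ dim(e_A U)`. -/
lemma finrank_extT_submodular {n : Type*} [Fintype n] [DecidableEq n] (A : Matrix n n ℝ)
    (V W : Submodule ℝ (n → ℝ)) :
    finrank ℝ ↥(extT A (V ⊔ W)) + finrank ℝ ↥(extT A (V ⊓ W)) ≤
      finrank ℝ ↥(extT A V) + finrank ℝ ↥(extT A W) := by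
  calc finrank ℝ ↥(extT A (V ⊔ W)) + finrank ℝ ↥(extT A (V ⊓ W))
      ≤ finrank ℝ ↥(extT A V ⊔ extT A W) + finrank ℝ ↥(extT A V ⊓ extT A W) := by
        rw [extT_sup]
        exact Nat.add_le_add_left (Submodule.finrank_mono (extT_inf_le A V W)) _
    _ = finrank ℝ ↥(extT A V) + finrank ℝ ↥(extT A W) :=
        Submodule.finrank_sup_add_finrank_inf_eq _ _

/-- The second order extension width is at most the second order contraction width:
`Δ²_{T₁,T₂} V = Δ_{T₁}(e_{T₂} V) − Δ_{T₁} V ≤ Δ_{T₁} V − Δ_{T₁}(c_{T₂} V) = ∇²_{T₁,T₂} V`. -/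
theorem stmt8 (L : ℕ) (d1 d2 : Fin L → ℝ) (hd1 : ∀ ℓ, d1 ℓ ≠ 0) (hd2 : ∀ ℓ, d2 ℓ ≠ 0)
    (V : Submodule ℝ (Fin L → ℝ)) :
    (widthT (Matrix.diagonal d1) (extT (Matrix.diagonal d2) V) : ℤ) -
        widthT (Matrix.diagonal d1) V ≤
      (widthT (Matrix.diagonal d1) V : ℤ) -
        widthT (Matrix.diagonal d1) (conT (Matrix.diagonal d2) V) := by
  set D1 := Matrix.diagonal d1 with hD1
  set D2 := Matrix.diagonal d2 with hD2
  set b := Matrix.toLin' D2 with hb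
  -- b is a linear equivalence
  have hBB' : D2 * Matrix.diagonal (fun i => (d2 i)⁻¹) = 1 := by
    rw [hD2, Matrix.diagonal_mul_diagonal,
      show (fun i => d2 i * (d2 i)⁻¹) = fun _ => (1:ℝ) from
        funext fun i => mul_inv_cancel₀ (hd2 i)]
    exact Matrix.diagonal_one
  have hB'B : Matrix.diagonal (fun i => (d2 i)⁻¹) * D2 = 1 := by
    rw [hD2, Matrix.diagonal_mul_diagonal,
      show (fun i => (d2 i)⁻¹ * d2 i) = fun _ => (1:ℝ) from
        funext fun i => inv_mul_cancel₀ (hd2 i)]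
    exact Matrix.diagonal_one
  set e2 : (Fin L → ℝ) ≃ₗ[ℝ] (Fin L → ℝ) :=
    LinearEquiv.ofLinear b (Matrix.toLin' (Matrix.diagonal (fun i => (d2 i)⁻¹)))
      (by rw [hb, ← Matrix.toLin'_mul, hBB', Matrix.toLin'_one])
      (by rw [hb, ← Matrix.toLin'_mul, hB'B, Matrix.toLin'_one]) with he2
  have he2coe : (e2 : (Fin L → ℝ) →ₗ[ℝ] (Fin L → ℝ)) = b := rfl
  -- commutation: extT D1 (map b U) = map b (extT D1 U)
  have hcomm : Matrix.toLin' D1 ∘ₗ b = b ∘ₗ Matrix.toLin' D1 := by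
    rw [hb, ← Matrix.toLin'_mul, ← Matrix.toLin'_mul, hD1, hD2,
      Matrix.diagonal_mul_diagonal, Matrix.diagonal_mul_diagonal,
      show (fun i => d1 i * d2 i) = fun i => d2 i * d1 i from
        funext fun i => mul_comm _ _]
  have hextmap : ∀ U : Submodule ℝ (Fin L → ℝ),
      extT D1 (U.map b) = (extT D1 U).map b := by
    intro U
    simp only [extT, Submodule.map_sup]
    congr 1
    rw [← Submodule.map_comp, ← Submodule.map_comp, hcomm]
  -- finrank invariance under map b
  have hfr : ∀ U : Submodule ℝ (Fin L → ℝ), finrank ℝ ↥(U.map b) = finrank ℝ ↥U := by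
    intro U
    rw [← he2coe]
    exact LinearEquiv.finrank_map_eq e2 U
  -- apply submodularity with W = map b V
  have hsub := finrank_extT_submodular D1 V (V.map b)
  have hmod := Submodule.finrank_sup_add_finrank_inf_eq V (V.map b)
  rw [hextmap V, hfr (extT D1 V)] at hsub
  rw [hfr V] at hmod
  -- Now translate widthT with natural subtraction
  have hE : extT D2 V = V ⊔ V.map b := rfl
  have hC : conT D2 V = V ⊓ V.map b := rfl
  rw [hE, hC]
  simp only [widthT]
  have h1 := finrank_le_extT D1 (V ⊔ V.map b)
  have h2 := finrank_le_extT D1 V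
  have h3 := finrank_le_extT D1 (V ⊓ V.map b)
  omega
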